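/- Under the garbage-collection heap separation, the shared/owned repartition function preserves the heap: if readjust(s, o, h') = (s', o') for a heap h' with dom(s ⊎ o) = dom(h'), then s' ⊎ o' = h', dom(s') = dom(s) ∪ Pub and dom(o') = dom(o) \ Pub, where Pub is the set of all cells of records reachable from the shared pointer variables in h'; in particular dom(s) ⊆ dom(s') (shared cells stay shared) and the resulting state is separated. -/

import Mathlib

namespace PaperGC

/-- Heaps: partial maps from variables and addresses to naturals. -/
abbrev Heap := (String ⊕ ℕ) → Option ℕ

/-- Domain of a heap. -/
def dom (h : Heap) : Set (String ⊕ ℕ) := {x | h x ≠ none}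

open Classical

/-- Restriction of a heap to a set of keys. -/
noncomputable def restrict (h : Heap) (D : Set (String ⊕ ℕ)) : Heap :=
  fun x => if x ∈ D then h x else none

/-- Union of two heaps (left-biased; used on disjoint heaps). -/
def hunion (s o : Heap) : Heap := fun x => (s x).orElse (fun _ => o x)

/-- Addresses of records reachable from the shared pointer variables `Vsh`
following the first `m` (pointer) selectors: the least fixed point
  S₀ = {a | ∃ x ∈ Vsh, h(x) = a},
  S_{i+1} = S_i ∪ {b | ∃ a ∈ S_i, ∃ k < m, h(a+k) = b}. -/
inductive RecShared (Vsh : Set String) (m : ℕ) (h : Heap) : ℕ → Prop where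
  | base {x a} : x ∈ Vsh → h (Sum.inl x) = some a → RecShared Vsh m h a
  | step {a k b} : RecShared Vsh m h a → k < m →
      h (Sum.inr (a + k)) = some b → RecShared Vsh m h b

/-- All cells `a+0, …, a+n` of shared records: the published cells. -/
def Pub (Vsh : Set String) (m n : ℕ) (h : Heap) : Set (String ⊕ ℕ) :=
  {x | ∃ a j, RecShared Vsh m h a ∧ j ≤ n ∧ x = Sum.inr (a + j)}

/-- `readjust(s, o, h')` splits the updated heap `h'` into the new shared part
(domain `dom s ∪ Pub`) and the new owned part (domain `dom o \ Pub`). -/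
noncomputable def readjust (Vsh : Set String) (m n : ℕ) (s o h' : Heap) :
    Heap × Heap :=
  (restrict h' (dom s ∪ Pub Vsh m n h'),
   restrict h' (dom o \ Pub Vsh m n h'))

open Set

section Restrict

variable (h : Heap) {D E : Set (String ⊕ ℕ)}

theorem dom_restrict (D : Set (String ⊕ ℕ)) : dom (restrict h D) = D ∩ dom h := by
  ext x
  simp [dom, restrict]

theorem dom_restrict_of_subset (hD : D ⊆ dom h) : dom (restrict h D) = D := by
  rw [dom_restrict, inter_eq_left.mpr hD]

theorem hunion_restrict : hunion (restrict h D) (restrict h E) = restrict h (D ∪ E) := by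
  funext x
  by_cases hxD : x ∈ D <;> by_cases hxE : x ∈ E <;> cases hx : h x <;>
    simp [hunion, restrict, hxD, hxE, hx]

theorem restrict_of_dom_subset (hD : dom h ⊆ D) : restrict h D = h := by
  funext x
  by_cases hx : x ∈ D
  · simp [restrict, hx]
  · simpa [restrict, hx, dom, eq_comm] using mt (@hD x) hx

end Restrict

/-- the shared/owned repartition preserves the heap, shared
cells stay shared, and the result is separated. -/
theorem readjust_spec (Vsh : Set String) (m n : ℕ) (s o h' : Heap)
    (hdisj : dom s ∩ dom o = ∅)
    (hdom : dom s ∪ dom o = dom h')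
    (hpub : Pub Vsh m n h' ⊆ dom h') :
    hunion (readjust Vsh m n s o h').1 (readjust Vsh m n s o h').2 = h' ∧
    dom (readjust Vsh m n s o h').1 = dom s ∪ Pub Vsh m n h' ∧
    dom (readjust Vsh m n s o h').2 = dom o \ Pub Vsh m n h' ∧
    dom s ⊆ dom (readjust Vsh m n s o h').1 ∧
    dom (readjust Vsh m n s o h').1 ∩ dom (readjust Vsh m n s o h').2 = ∅ := by
  set P := Pub Vsh m n h'
  have hs : dom s ⊆ dom h' := hdom ▸ subset_union_left
  have ho : dom o ⊆ dom h' := hdom ▸ subset_union_right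
  have hshared : dom (readjust Vsh m n s o h').1 = dom s ∪ P :=
    dom_restrict_of_subset h' (union_subset hs hpub)
  have howned : dom (readjust Vsh m n s o h').2 = dom o \ P :=
    dom_restrict_of_subset h' (sdiff_subset.trans ho)
  refine ⟨?_, hshared, howned, hshared ▸ subset_union_left, ?_⟩
  · refine (hunion_restrict h').trans (restrict_of_dom_subset h' ?_)
    calc dom h' = dom s ∪ dom o := hdom.symm
      _ ⊆ dom s ∪ (P ∪ dom o) := union_subset_union_right _ subset_union_right
      _ = dom s ∪ P ∪ (dom o \ P) := by rw [union_assoc, union_sdiff_self]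
  · rw [hshared, howned, eq_empty_iff_forall_notMem]
    rintro x ⟨hxs | hxP, hxo, hxP'⟩
    · exact hdisj.subset ⟨hxs, hxo⟩
    · exact hxP' hxP

end PaperGC
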